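/- For g = sl(2,C) acting on V = sl(2,C) by the adjoint representation, the vertex algebra homomorphism ρ̂: O(sl(2), -K) → S(V) (K the Killing form), sending the generators x, y, h of sl(2) to θ^x(z) = 2:β^x γ^{h'}: - :β^h γ^{y'}:, θ^y(z) = -2:β^y γ^{h'}: + :β^h γ^{x'}:, θ^h(z) = -2:β^x γ^{x'}: + 2:β^y γ^{y'}:, is injective. Equivalently, at the level of associated graded rings, the induced map from the polynomial ring C[x_k, y_k, h_k : k ≥ 0] to gr(S(V)) sending x_k ↦ τ^x_k, y_k ↦ τ^y_k, h_k ↦ τ^h_k is injective because the τ^u_k are algebraically independent. -/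

import Mathlib

open MvPolynomial

/-- Generators: `((u, true), k)` is `β^u_k`, `((u, false), k)` is `γ^{u'}_k`, `u : Fin 3` encodes
`x, y, h` as `0, 1, 2`, and `k` is the level. -/
abbrev PGen : Type := (Fin 3 × Bool) × ℕ

abbrev Pring : Type := MvPolynomial PGen ℂ

noncomputable def Beta (u : Fin 3) (k : ℕ) : Pring := X ((u, true), k)
noncomputable def Gam (u : Fin 3) (k : ℕ) : Pring := X ((u, false), k)

/-- `c^n_k = k (k-1) ⋯ (k-n+1)`, which vanishes for `n > k` and equals `1` for `n = 0`. -/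
noncomputable def cnk (n k : ℕ) : ℂ := (k.descFactorial n : ℂ)

/-- `v^h(n)`: `β^u_k ↦ -c^n_k β^u_{k-n}`, `γ^{u'}_k ↦ c^n_k γ^{u'}_{k-n}`. -/
noncomputable def vH (n : ℕ) : Derivation ℂ Pring Pring :=
  mkDerivation ℂ (fun g => match g with
    | ((u, true), k) => -(cnk n k) • Beta u (k - n)
    | ((u, false), k) => (cnk n k) • Gam u (k - n))

/-- `v^x(n)`: `β^u_k ↦ -(1/2) c^n_k γ^{u'}_{k-n}`, `γ^{u'}_k ↦ 0`. -/
noncomputable def vX (n : ℕ) : Derivation ℂ Pring Pring :=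
  mkDerivation ℂ (fun g => match g with
    | ((u, true), k) => (-(2⁻¹ : ℂ) * cnk n k) • Gam u (k - n)
    | ((_, false), _) => 0)

/-- `v^y(n)`: `β^u_k ↦ 0`, `γ^{u'}_k ↦ -(1/2) c^n_k β^u_{k-n}`. -/
noncomputable def vY (n : ℕ) : Derivation ℂ Pring Pring :=
  mkDerivation ℂ (fun g => match g with
    | ((_, true), _) => 0
    | ((u, false), k) => (-(2⁻¹ : ℂ) * cnk n k) • Beta u (k - n))


noncomputable def Del : Derivation ℂ Pring Pring :=
  mkDerivation ℂ (fun g => ((g.2 + 1 : ℕ) : ℂ) • (X (g.1, g.2 + 1) : Pring))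

/-- `τ^x_0 = 2 β^x_0 γ^{h'}_0 - β^h_0 γ^{y'}_0`, `τ^y_0 = -2 β^y_0 γ^{h'}_0 + β^h_0 γ^{x'}_0`,
`τ^h_0 = -2 β^x_0 γ^{x'}_0 + 2 β^y_0 γ^{y'}_0`. -/
noncomputable def tau0 : Fin 3 → Pring :=
  ![2 * Beta 0 0 * Gam 2 0 - Beta 2 0 * Gam 1 0,
    -2 * Beta 1 0 * Gam 2 0 + Beta 2 0 * Gam 0 0,
    -2 * Beta 0 0 * Gam 0 0 + 2 * Beta 1 0 * Gam 1 0]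

/-- `τ^u_k = ∂^k τ^u_0`. -/
noncomputable def tau (u : Fin 3) (k : ℕ) : Pring := (fun p => Del p)^[k] (tau0 u)

/-- The subalgebra `P_τ` generated by the `τ^u_k`. -/
noncomputable def Ptau : Subalgebra ℂ Pring :=
  Algebra.adjoin ℂ (Set.range fun p : Fin 3 × ℕ => tau p.1 p.2)

/-- `P^{A_+}`: the polynomials annihilated by all `v^u(n)`, `u ∈ {x,y,h}`, `n ≥ 0`. -/
def AplusInv (ω : Pring) : Prop := ∀ n : ℕ, vH n ω = 0 ∧ vX n ω = 0 ∧ vY n ω = 0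


set_option maxHeartbeats 1000000
set_option synthInstance.maxHeartbeats 1000000

/-! ### Auxiliary development for the proof of `stmt16`.

We find an algebra map `ψ : Pring →ₐ[ℂ] K` into the fraction field `K` of
`Mv := MvPolynomial (Fin 3 × ℕ) ℂ` such that `ψ (tau u k)` is exactly the image of the
variable `X (u, k)`.  Injectivity of `aeval tau` then follows by composing. -/

/-- Convolution sums `∑_{i+j=k} β^u_i γ^{v'}_j`. -/
noncomputable def Conv (u v : Fin 3) (k : ℕ) : Pring :=
  ∑ i ∈ Finset.range (k + 1), Beta u i * Gam v (k - i)

lemma Del_Beta (u : Fin 3) (i : ℕ) : Del (Beta u i) = ((i + 1 : ℕ) : ℂ) • Beta u (i + 1) := by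
  simp [Del, Beta, mkDerivation_X]

lemma Del_Gam (u : Fin 3) (i : ℕ) : Del (Gam u i) = ((i + 1 : ℕ) : ℂ) • Gam u (i + 1) := by
  simp [Del, Gam, mkDerivation_X]

lemma Del_Conv (u v : Fin 3) (k : ℕ) :
    Del (Conv u v k) = ((k + 1 : ℕ) : ℂ) • Conv u v (k + 1) := by
  set F : ℕ → Pring := fun j => (j : ℂ) • (Beta u j * Gam v (k + 1 - j)) with hF
  set G : ℕ → Pring := fun i => ((k + 1 - i : ℕ) : ℂ) • (Beta u i * Gam v (k + 1 - i)) with hG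
  have claim1 : Del (Conv u v k) = ∑ i ∈ Finset.range (k + 1), (F (i + 1) + G i) := by
    rw [Conv, map_sum]
    refine Finset.sum_congr rfl fun i hi => ?_
    have hik : i ≤ k := Nat.lt_succ_iff.mp (Finset.mem_range.mp hi)
    have h1 : k + 1 - (i + 1) = k - i := by omega
    have h2 : k + 1 - i = (k - i) + 1 := by omega
    rw [Derivation.leibniz, Del_Beta, Del_Gam, hF, hG]
    simp only [h1, h2]
    rw [smul_comm, smul_comm (Gam v (k-i)), smul_eq_mul, smul_eq_mul]
    push_cast
    rw [mul_comm (Gam v (k - i))]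
    ring_nf
  have hF0 : F 0 = 0 := by simp [hF]
  have hGtop : G (k + 1) = 0 := by simp [hG]
  have claim2 : ∑ i ∈ Finset.range (k + 1), F (i + 1) = ∑ i ∈ Finset.range (k + 2), F i := by
    rw [Finset.sum_range_succ' F (k + 1), hF0, add_zero]
  have claim3 : ∑ i ∈ Finset.range (k + 1), G i = ∑ i ∈ Finset.range (k + 2), G i := by
    rw [Finset.sum_range_succ G (k + 1), hGtop, add_zero]
  rw [claim1, Finset.sum_add_distrib, claim2, claim3, ← Finset.sum_add_distrib, Conv,
    Finset.smul_sum]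
  refine Finset.sum_congr rfl fun i hi => ?_
  have hik : i ≤ k + 1 := Nat.lt_succ_iff.mp (Finset.mem_range.mp hi)
  have h3 : i + (k + 1 - i) = k + 1 := by omega
  rw [hF, hG, ← add_smul]
  congr 1
  rw [← Nat.cast_add, h3]

/-- The value of `τ^u_k` divided by `k!`. -/
noncomputable def TT (u : Fin 3) (k : ℕ) : Pring :=
  ![(2 : ℂ) • Conv 0 2 k - Conv 2 1 k,
    (-2 : ℂ) • Conv 1 2 k + Conv 2 0 k,
    (-2 : ℂ) • Conv 0 0 k + (2 : ℂ) • Conv 1 1 k] u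

lemma csmul (c : ℂ) (p : Pring) : c • p = C c * p := by
  rw [Algebra.smul_def]; rfl

lemma TT_zero (u : Fin 3) : TT u 0 = tau0 u := by
  fin_cases u <;> simp [TT, tau0, Conv, Finset.sum_range_one, csmul, map_ofNat] <;> ring

lemma Del_TT (u : Fin 3) (k : ℕ) : Del (TT u k) = ((k + 1 : ℕ) : ℂ) • TT u (k + 1) := by
  fin_cases u <;>
    simp [TT, map_sub, map_add, Derivation.map_smul, Del_Conv, smul_sub, smul_add, smul_smul] <;>
    ring_nf

/-- The closed formula `τ^u_k = k! ∑_{i+j=k} (bilinear terms)`. -/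
lemma tau_formula (u : Fin 3) (k : ℕ) : tau u k = ((k.factorial : ℕ) : ℂ) • TT u k := by
  induction k with
  | zero => simp [tau, TT_zero]
  | succ k ih =>
      have h : tau u (k + 1) = Del (tau u k) := by
        rw [tau, tau, Function.iterate_succ_apply']
      rw [h, ih, Derivation.map_smul, Del_TT, smul_smul]
      congr 1
      rw [Nat.factorial_succ]
      push_cast
      ring

/-! ### The fraction field side -/

abbrev Mv : Type := MvPolynomial (Fin 3 × ℕ) ℂ
abbrev K : Type := FractionRing Mv

/-- Constants of `K`. -/
noncomputable abbrev am (c : ℂ) : K := algebraMap ℂ K c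

/-- The canonical images of the variables of `Mv` in `K`. -/
noncomputable def xi (p : Fin 3 × ℕ) : K := algebraMap Mv K (X p)

lemma am_ne (c : ℂ) (hc : c ≠ 0) : am c ≠ 0 := fun h =>
  hc ((algebraMap ℂ K).injective
    (show algebraMap ℂ K c = algebraMap ℂ K 0 by rw [map_zero]; exact h))

lemma xi_ne (p : Fin 3 × ℕ) : xi p ≠ 0 := by
  intro hx
  have h0 : algebraMap Mv K (X p) = algebraMap Mv K 0 := by
    rw [map_zero]; exact hx
  exact X_ne_zero p (IsFractionRing.injective Mv K h0)

noncomputable def aS (k : ℕ) : K := (am (2 * (k.factorial : ℂ)))⁻¹ * xi (0, k)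
noncomputable def bS (k : ℕ) : K := (am (-(2 * (k.factorial : ℂ))))⁻¹ * xi (1, k)
noncomputable def wS (k : ℕ) : K := (am (-(2 * (k.factorial : ℂ))))⁻¹ * xi (2, k)

lemma fact_ne (k : ℕ) : (2 * ((k.factorial : ℕ) : ℂ)) ≠ 0 := by
  have := k.factorial_ne_zero
  simp_all [Nat.cast_ne_zero]

lemma aS0_ne : aS 0 ≠ 0 :=
  mul_ne_zero (inv_ne_zero (am_ne _ (fact_ne 0))) (xi_ne (0, 0))

/-- The recursively defined images of the `γ^{x'}_k`, inverting the convolution with `aS`. -/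
noncomputable def pS : ℕ → K
  | k => (aS 0)⁻¹ * (wS k - ∑ i ∈ (Finset.range k).attach, aS (k - i.1) * pS i.1)
  decreasing_by exact Finset.mem_range.mp i.2

lemma pS_def (k : ℕ) :
    pS k = (aS 0)⁻¹ * (wS k - ∑ i ∈ Finset.range k, aS (k - i) * pS i) := by
  rw [pS]
  congr 1
  rw [← Finset.sum_attach (Finset.range k) (fun i => aS (k - i) * pS i)]

lemma conv_ap (k : ℕ) : ∑ i ∈ Finset.range (k + 1), aS i * pS (k - i) = wS k := by
  have h1 : ∑ i ∈ Finset.range (k + 1), aS i * pS (k - i)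
      = ∑ i ∈ Finset.range (k + 1), aS (k - i) * pS i := by
    rw [← Finset.sum_range_reflect (fun i => aS i * pS (k - i)) (k + 1)]
    refine Finset.sum_congr rfl fun i hi => ?_
    have : i ≤ k := Nat.lt_succ_iff.mp (Finset.mem_range.mp hi)
    congr 2 <;> omega
  rw [h1, Finset.sum_range_succ, Nat.sub_self, pS_def k,
    mul_inv_cancel_left₀ aS0_ne]
  ring

/-- The images of the generators of `Pring` under `ψ`:
`β^x ↦ aS`, `β^y ↦ bS`, `β^h ↦ 0`, `γ^{x'} ↦ pS`, `γ^{y'} ↦ 0`, `γ^{h'} ↦ δ_{k,0}`. -/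
noncomputable def gen : PGen → K := fun g =>
  match g with
  | ((u, true), k) => ![aS k, bS k, 0] u
  | ((u, false), k) => ![pS k, 0, if k = 0 then 1 else 0] u

lemma psi_Conv (u v : Fin 3) (k : ℕ) :
    aeval gen (Conv u v k)
      = ∑ i ∈ Finset.range (k + 1),
          (![aS i, bS i, 0] u) * (![pS (k - i), 0, if k - i = 0 then 1 else 0] v) := by
  simp [Conv, map_sum, Beta, Gam, gen]

lemma delta_sum (f : ℕ → K) (k : ℕ) :
    ∑ i ∈ Finset.range (k + 1), f i * (if k - i = 0 then 1 else 0) = f k := by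
  rw [Finset.sum_eq_single_of_mem k (Finset.self_mem_range_succ k)]
  · simp
  · intro i hi hne
    have : ¬ (k - i = 0) := by
      have := Finset.mem_range.mp hi; omega
    simp [this]

lemma psi_Conv02 (k : ℕ) : aeval gen (Conv 0 2 k) = aS k := by
  rw [psi_Conv]; simpa using delta_sum aS k

lemma psi_Conv12 (k : ℕ) : aeval gen (Conv 1 2 k) = bS k := by
  rw [psi_Conv]; simpa using delta_sum bS k

lemma psi_Conv21 (k : ℕ) : aeval gen (Conv 2 1 k) = 0 := by
  rw [psi_Conv]; simp

lemma psi_Conv20 (k : ℕ) : aeval gen (Conv 2 0 k) = 0 := by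
  rw [psi_Conv]; simp

lemma psi_Conv11 (k : ℕ) : aeval gen (Conv 1 1 k) = 0 := by
  rw [psi_Conv]; simp

lemma psi_Conv00 (k : ℕ) : aeval gen (Conv 0 0 k) = wS k := by
  rw [psi_Conv]; simpa using conv_ap k

lemma cancel_help (c : ℂ) (hc : c ≠ 0) (x : K) (d e : ℂ) (hde : d * e = c) :
    am d * (am e * ((am c)⁻¹ * x)) = x := by
  rw [← mul_assoc, ← map_mul, hde]
  exact mul_inv_cancel_left₀ (am_ne c hc) x

lemma psi_tau0 (k : ℕ) : aeval gen (tau 0 k) = xi (0, k) := by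
  rw [tau_formula, csmul, map_mul, aeval_C]
  simp only [TT, Matrix.cons_val_zero, csmul, map_sub, map_mul, aeval_C,
    psi_Conv02, psi_Conv21]
  rw [sub_zero, aS]
  exact cancel_help _ (fact_ne k) _ _ _ (by push_cast; ring)

lemma psi_tau1 (k : ℕ) : aeval gen (tau 1 k) = xi (1, k) := by
  rw [tau_formula, csmul, map_mul, aeval_C]
  simp only [TT, Matrix.cons_val_one, Matrix.head_cons, Matrix.cons_val_zero, csmul, map_add, map_mul, aeval_C,
    psi_Conv12, psi_Conv20]
  rw [add_zero, bS]
  exact cancel_help _ (neg_ne_zero.mpr (fact_ne k)) _ _ _ (by push_cast; ring)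

lemma psi_tau2 (k : ℕ) : aeval gen (tau 2 k) = xi (2, k) := by
  rw [tau_formula, csmul, map_mul, aeval_C]
  simp only [TT, Matrix.cons_val_two, Matrix.tail_cons, Matrix.head_cons, csmul,
    map_add, map_mul, aeval_C, psi_Conv00, psi_Conv11]
  rw [mul_zero, add_zero, wS]
  exact cancel_help _ (neg_ne_zero.mpr (fact_ne k)) _ _ _ (by push_cast; ring)

lemma psi_tau (u : Fin 3) (k : ℕ) : aeval gen (tau u k) = xi (u, k) := by
  fin_cases u
  · exact psi_tau0 k
  · exact psi_tau1 k
  · exact psi_tau2 k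

/-- the vertex algebra map `ρ̂ : O(sl(2), -K) → S(V)` is injective;
equivalently, at the level of associated graded rings, the algebra map from the polynomial ring
`C[x_k, y_k, h_k : k ≥ 0]` to `gr(S(V)) = P` sending `x_k ↦ τ^x_k`, `y_k ↦ τ^y_k`,
`h_k ↦ τ^h_k` is injective, because the `τ^u_k` are algebraically independent. -/
theorem stmt16 :
    Function.Injective
      (aeval (fun p : Fin 3 × ℕ => tau p.1 p.2) : MvPolynomial (Fin 3 × ℕ) ℂ →ₐ[ℂ] Pring) ∧
    AlgebraicIndependent ℂ (fun p : Fin 3 × ℕ => tau p.1 p.2) := by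
  have hinj : Function.Injective
      (aeval (fun p : Fin 3 × ℕ => tau p.1 p.2) : MvPolynomial (Fin 3 × ℕ) ℂ →ₐ[ℂ] Pring) := by
    have hcomp : (aeval gen).comp
        (aeval (fun p : Fin 3 × ℕ => tau p.1 p.2) : MvPolynomial (Fin 3 × ℕ) ℂ →ₐ[ℂ] Pring)
        = aeval xi := by
      refine algHom_ext fun p => ?_
      simp only [AlgHom.comp_apply, aeval_X]
      exact psi_tau p.1 p.2
    have hxi : Function.Injective (aeval xi : Mv →ₐ[ℂ] K) := by
      have heq : (aeval xi : Mv →ₐ[ℂ] K) = IsScalarTower.toAlgHom ℂ Mv K :=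
        algHom_ext fun p => by simp [xi]
      rw [heq]
      exact IsFractionRing.injective Mv K
    rw [← hcomp, AlgHom.coe_comp] at hxi
    exact Function.Injective.of_comp hxi
  exact ⟨hinj, algebraicIndependent_iff_injective_aeval.mpr hinj⟩
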